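/- arXiv:0707.0994 — 3 statements merged into one kernel-verified Lean document; each statement's English description precedes it below -/
import Mathlib

section
/- If E has a countable base of neighborhoods of 0 (equivalently, the topology of E is generated by an increasing sequence of seminorms (p_n)_{n∈ℕ}), then every internal subset of G_E is closed with respect to the sharp topology. -/
open Filter Topology Asymptotics

noncomputable section

namespace ColombeauPaper

variable {ι κ : Type*} {E : Type*} [AddCommGroup E] [Module ℝ E]
  {F : Type*} [AddCommGroup F] [Module ℝ F]

/-- A net `(u_ε)` in `E` is moderate for the family of seminorms `p` if for every `i`
there is `M ∈ ℕ` with `p i (u_ε) ≤ ε ^ (-M)` for all sufficiently small `ε > 0`. -/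
def IsModerate (p : ι → Seminorm ℝ E) (u : ℝ → E) : Prop :=
  ∀ i, ∃ M : ℕ, ∀ᶠ ε in 𝓝[>] (0 : ℝ), p i (u ε) ≤ ε ^ (-(M : ℤ))

/-- A net `(u_ε)` in `E` is negligible if for every `i` and every `m ∈ ℕ` one has
`p i (u_ε) ≤ ε ^ m` for all sufficiently small `ε > 0`. -/
def IsNegligible (p : ι → Seminorm ℝ E) (u : ℝ → E) : Prop :=
  ∀ i, ∀ m : ℕ, ∀ᶠ ε in 𝓝[>] (0 : ℝ), p i (u ε) ≤ ε ^ m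

/-- A negligible net of real numbers. -/
def IsNegligibleR (n : ℝ → ℝ) : Prop :=
  ∀ m : ℕ, ∀ᶠ ε in 𝓝[>] (0 : ℝ), |n ε| ≤ ε ^ m

lemma small_mem : {ε : ℝ | 0 < ε ∧ ε ≤ 1 / 2} ∈ 𝓝[>] (0 : ℝ) := by
  have h : Set.Ioo (0 : ℝ) (1 / 2) ∈ 𝓝[>] (0 : ℝ) :=
    Ioo_mem_nhdsGT_of_mem ⟨le_refl 0, by norm_num⟩
  filter_upwards [h] with ε hε
  exact ⟨hε.1, hε.2.le⟩

lemma zpow_neg_natCast_eq {ε : ℝ} (k : ℕ) : ε ^ (-(k : ℤ)) = ε⁻¹ ^ (k : ℤ) := by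
  rw [zpow_neg, inv_zpow]

/-- The moderate nets form an additive subgroup of `(0,1) → E` (here modelled on `ℝ → E`,
with all conditions holding for sufficiently small `ε > 0`). -/
def moderateGroup (p : ι → Seminorm ℝ E) : AddSubgroup (ℝ → E) where
  carrier := {u | IsModerate p u}
  zero_mem' := by
    intro i
    refine ⟨0, ?_⟩
    filter_upwards [self_mem_nhdsWithin] with ε hε
    have hε' : (0 : ℝ) < ε := hε
    simp only [Pi.zero_apply, map_zero]
    positivity
  add_mem' := by
    intro u v hu hv i
    obtain ⟨M, hM⟩ := hu i
    obtain ⟨N, hN⟩ := hv i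
    refine ⟨max M N + 1, ?_⟩
    filter_upwards [hM, hN, small_mem] with ε h1 h2 h3
    obtain ⟨hε, hε2⟩ := h3
    have hinv : (1 : ℝ) ≤ ε⁻¹ := (one_le_inv₀ hε).2 (by linarith)
    have h2inv : (2 : ℝ) ≤ ε⁻¹ := by
      nlinarith [mul_inv_cancel₀ (ne_of_gt hε)]
    have key : ∀ k l : ℕ, k ≤ l → ε ^ (-(k : ℤ)) ≤ ε ^ (-(l : ℤ)) := by
      intro k l hkl
      rw [zpow_neg_natCast_eq, zpow_neg_natCast_eq]
      exact zpow_le_zpow_right₀ hinv (by exact_mod_cast hkl)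
    set K : ℕ := max M N with hK
    have h1' : p i (u ε) ≤ ε ^ (-(K : ℤ)) := h1.trans (key M K (le_max_left _ _))
    have h2' : p i (v ε) ≤ ε ^ (-(K : ℤ)) := h2.trans (key N K (le_max_right _ _))
    have tri : p i ((u + v) ε) ≤ p i (u ε) + p i (v ε) := by
      simpa using map_add_le_add (p i) (u ε) (v ε)
    have efin : ε ^ (-(K : ℤ)) * 2 ≤ ε ^ (-((K + 1 : ℕ) : ℤ)) := by
      rw [zpow_neg_natCast_eq, zpow_neg_natCast_eq]
      push_cast
      have hnn : (0:ℝ) ≤ ε⁻¹ ^ (K : ℤ) := by positivity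
      calc ε⁻¹ ^ (K : ℤ) * 2 ≤ ε⁻¹ ^ (K : ℤ) * ε⁻¹ :=
            mul_le_mul_of_nonneg_left h2inv hnn
        _ = ε⁻¹ ^ ((K : ℤ) + 1) := by rw [zpow_add₀ (by positivity : (ε⁻¹ : ℝ) ≠ 0), zpow_one]
    push_cast at efin ⊢
    linarith
  neg_mem' := by
    intro u hu i
    obtain ⟨M, hM⟩ := hu i
    refine ⟨M, ?_⟩
    filter_upwards [hM] with ε h
    simpa [map_neg_eq_map] using h

/-- The negligible nets form an additive subgroup of the moderate ones. -/
def negligibleGroup (p : ι → Seminorm ℝ E) : AddSubgroup (moderateGroup p) where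
  carrier := {u | IsNegligible p (u : ℝ → E)}
  zero_mem' := by
    intro i m
    filter_upwards [self_mem_nhdsWithin] with ε hε
    have hε' : (0 : ℝ) < ε := hε
    simp only [AddSubgroup.coe_zero, Pi.zero_apply, map_zero]
    positivity
  add_mem' := by
    intro u v hu hv i m
    filter_upwards [hu i (m + 1), hv i (m + 1), small_mem] with ε h1 h2 h3
    obtain ⟨hε, hε2⟩ := h3
    have tri : p i (((u + v : moderateGroup p) : ℝ → E) ε)
        ≤ p i ((u : ℝ → E) ε) + p i ((v : ℝ → E) ε) := by
      simpa using map_add_le_add (p i) ((u : ℝ → E) ε) ((v : ℝ → E) ε)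
    have hpow : ε ^ (m + 1) = ε ^ m * ε := pow_succ ε m
    nlinarith [pow_nonneg hε.le m]
  neg_mem' := by
    intro u hu i m
    filter_upwards [hu i m] with ε h
    have : ((-u : moderateGroup p) : ℝ → E) ε = -((u : ℝ → E) ε) := rfl
    rw [this, map_neg_eq_map]
    exact h

/-- The Colombeau space based on `E` (with the family of seminorms `p`):
the quotient of the moderate nets by the negligible ones. -/
abbrev Colombeau (p : ι → Seminorm ℝ E) : Type _ :=
  moderateGroup p ⧸ negligibleGroup p

/-- The internal subset of `𝒢_E` generated by a net `(A_ε)` of subsets of `E`: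
all `u` having a representative `(u_ε)` with `u_ε ∈ A_ε` for sufficiently small `ε`. -/
def internalSet (p : ι → Seminorm ℝ E) (A : ℝ → Set E) : Set (Colombeau p) :=
  {u | ∃ w : moderateGroup p, (QuotientAddGroup.mk w : Colombeau p) = u ∧
        ∀ᶠ ε in 𝓝[>] (0 : ℝ), (w : ℝ → E) ε ∈ A ε}

/-- A subset of `𝒢_E` is internal if it is generated by some net of subsets of `E`. -/
def IsInternal (p : ι → Seminorm ℝ E) (A : Set (Colombeau p)) : Prop :=
  ∃ Anet : ℝ → Set E, A = internalSet p Anet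

/-- `d_i(u, A) = inf_{v ∈ A} p_i (u - v)`, with value `+∞` for `A = ∅`. -/
def semiDist (p : ι → Seminorm ℝ E) (i : ι) (u : E) (A : Set E) : EReal :=
  ⨅ v ∈ A, ((p i (u - v) : ℝ) : EReal)

/-- A sharply bounded net of subsets of `E`. -/
def SharplyBoundedNet (p : ι → Seminorm ℝ E) (A : ℝ → Set E) : Prop :=
  ∀ i, ∃ M : ℕ, ∀ᶠ ε in 𝓝[>] (0 : ℝ), ∀ w ∈ A ε, p i w ≤ ε ^ (-(M : ℤ))

/-- `p_i(u) ≤ α ^ t` in `ℝ̃` (where `α` is the class of `(ε)_ε`): some representative of the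
net of seminorms is bounded by `ε ^ t` up to a negligible net for small `ε`. -/
def seminormLeAlpha (p : ι → Seminorm ℝ E) (i : ι) (u : Colombeau p) (t : ℝ) : Prop :=
  ∃ (w : moderateGroup p) (n : ℝ → ℝ), (QuotientAddGroup.mk w : Colombeau p) = u ∧
    IsNegligibleR n ∧ ∀ᶠ ε in 𝓝[>] (0 : ℝ), p i ((w : ℝ → E) ε) ≤ ε ^ t + n ε

/-- The ultra-pseudo-seminorm `u ↦ |p_i(u)|_s = e^{-ν(p_i(u))}` on `𝒢_E`, where
`ν(x) = sup {b : |x_ε| = O(ε^b)}` is the valuation. -/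
def sharpSemi (p : ι → Seminorm ℝ E) (i : ι) (u : Colombeau p) : ℝ :=
  sInf {r : ℝ | ∃ (b : ℝ) (w : moderateGroup p), (QuotientAddGroup.mk w : Colombeau p) = u ∧
    r = Real.exp (-b) ∧ (fun ε => (p i ((w : ℝ → E) ε) : ℝ)) =O[𝓝[>] (0 : ℝ)] fun ε => ε ^ b}

/-- The sharp topology on `𝒢_E`: the topology generated by the ultra-pseudo-seminorms
`u ↦ |p_i(u)|_s`, i.e. generated by all the corresponding balls. -/
def sharpTopology (p : ι → Seminorm ℝ E) : TopologicalSpace (Colombeau p) :=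
  TopologicalSpace.generateFrom
    {B | ∃ (u : Colombeau p) (i : ι) (r : ℝ), 0 < r ∧
          B = {v | sharpSemi p i (v - u) < r}}

lemma indicator_norm_le_one (S : Set ℝ) (ε : ℝ) :
    ‖S.indicator (fun _ => (1 : ℝ)) ε‖ ≤ 1 := by
  by_cases h : ε ∈ S <;>
    simp [Set.indicator_of_mem, Set.indicator_of_notMem, h]

lemma eAux_le (p : ι → Seminorm ℝ E) (S : Set ℝ) (i : ι) (ε : ℝ) (x : E) :
    p i (S.indicator (fun _ => (1 : ℝ)) ε • x) ≤ p i x := by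
  rw [map_smul_eq_mul]
  calc ‖S.indicator (fun _ => (1 : ℝ)) ε‖ * p i x ≤ 1 * p i x :=
        mul_le_mul_of_nonneg_right (indicator_norm_le_one S ε) (apply_nonneg _ _)
    _ = p i x := one_mul _

/-- Multiplication by the characteristic function `χ_S`, on representatives. -/
def eAux (p : ι → Seminorm ℝ E) (S : Set ℝ) : moderateGroup p →+ moderateGroup p where
  toFun u := ⟨fun ε => S.indicator (fun _ => (1 : ℝ)) ε • (u : ℝ → E) ε, by
    have hu : IsModerate p (u : ℝ → E) := u.2
    intro i
    obtain ⟨M, hM⟩ := hu i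
    refine ⟨M, ?_⟩
    filter_upwards [hM] with ε hε
    exact (eAux_le p S i ε _).trans hε⟩
  map_zero' := by
    apply Subtype.ext
    funext ε
    simp
  map_add' u v := by
    apply Subtype.ext
    funext ε
    simp [smul_add]

/-- Multiplication by `e_S`, the class of the characteristic function of `S ⊆ (0,1)`,
as a map `𝒢_E → 𝒢_E`. -/
def eMul (p : ι → Seminorm ℝ E) (S : Set ℝ) : Colombeau p →+ Colombeau p :=
  QuotientAddGroup.map _ _ (eAux p S) (by
    intro u hu
    rw [AddSubgroup.mem_comap]
    have hu' : IsNegligible p (u : ℝ → E) := hu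
    show IsNegligible p _
    intro i m
    filter_upwards [hu' i m] with ε hε
    exact (eAux_le p S i ε _).trans hε)

/-- The set of finite interleavings `∑_{j=1}^m e_{S_j} a_j` of elements of `A`,
over partitions `{S_1, …, S_m}` of `(0,1)`. -/
def interleaving (p : ι → Seminorm ℝ E) (A : Set (Colombeau p)) : Set (Colombeau p) :=
  {u | ∃ (m : ℕ) (S : Fin m → Set ℝ) (a : Fin m → Colombeau p),
        (∀ j, a j ∈ A) ∧ (∀ j, S j ⊆ Set.Ioo 0 1) ∧
        (Pairwise fun j k => Disjoint (S j) (S k)) ∧ (⋃ j, S j) = Set.Ioo 0 1 ∧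
        u = ∑ j, eMul p (S j) (a j)}

/-- The family of seminorms `max (p_i, q_j)` generating the product topology on `E × F`. -/
def prodSeminorm (p : ι → Seminorm ℝ E) (q : κ → Seminorm ℝ F) :
    ι × κ → Seminorm ℝ (E × F) :=
  fun ij => (p ij.1).comp (LinearMap.fst ℝ E F) ⊔ (q ij.2).comp (LinearMap.snd ℝ E F)

lemma prodSeminorm_apply (p : ι → Seminorm ℝ E) (q : κ → Seminorm ℝ F) (i : ι) (j : κ)
    (x : E × F) : prodSeminorm p q (i, j) x = max (p i x.1) (q j x.2) := by
  simp [prodSeminorm, Seminorm.sup_apply, Seminorm.comp_apply]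

/-- First component of a moderate net in `E × F`, as a moderate net in `E`. -/
def prodFstAux [Nonempty κ] (p : ι → Seminorm ℝ E) (q : κ → Seminorm ℝ F) :
    moderateGroup (prodSeminorm p q) →+ moderateGroup p where
  toFun w := ⟨fun ε => ((w : ℝ → E × F) ε).1, by
    have hw : IsModerate (prodSeminorm p q) (w : ℝ → E × F) := w.2
    intro i
    obtain ⟨j⟩ := ‹Nonempty κ›
    obtain ⟨M, hM⟩ := hw (i, j)
    refine ⟨M, ?_⟩
    filter_upwards [hM] with ε hε
    calc p i (((w : ℝ → E × F) ε).1) ≤ prodSeminorm p q (i, j) ((w : ℝ → E × F) ε) := by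
          rw [prodSeminorm_apply]; exact le_max_left _ _
      _ ≤ ε ^ (-(M : ℤ)) := hε⟩
  map_zero' := by apply Subtype.ext; funext ε; simp
  map_add' u v := by apply Subtype.ext; funext ε; simp

/-- Second component of a moderate net in `E × F`, as a moderate net in `F`. -/
def prodSndAux [Nonempty ι] (p : ι → Seminorm ℝ E) (q : κ → Seminorm ℝ F) :
    moderateGroup (prodSeminorm p q) →+ moderateGroup q where
  toFun w := ⟨fun ε => ((w : ℝ → E × F) ε).2, by
    have hw : IsModerate (prodSeminorm p q) (w : ℝ → E × F) := w.2
    intro j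
    obtain ⟨i⟩ := ‹Nonempty ι›
    obtain ⟨M, hM⟩ := hw (i, j)
    refine ⟨M, ?_⟩
    filter_upwards [hM] with ε hε
    calc q j (((w : ℝ → E × F) ε).2) ≤ prodSeminorm p q (i, j) ((w : ℝ → E × F) ε) := by
          rw [prodSeminorm_apply]; exact le_max_right _ _
      _ ≤ ε ^ (-(M : ℤ)) := hε⟩
  map_zero' := by apply Subtype.ext; funext ε; simp
  map_add' u v := by apply Subtype.ext; funext ε; simp

/-- The canonical identification `𝒢_{E × F} ≅ 𝒢_E × 𝒢_F` (given on representatives by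
`[(u_ε, v_ε)] ↦ ([(u_ε)], [(v_ε)])`). -/
def prodIdent [Nonempty ι] [Nonempty κ] (p : ι → Seminorm ℝ E) (q : κ → Seminorm ℝ F) :
    Colombeau (prodSeminorm p q) →+ Colombeau p × Colombeau q :=
  QuotientAddGroup.lift (negligibleGroup (prodSeminorm p q))
    (((QuotientAddGroup.mk' (negligibleGroup p)).comp (prodFstAux p q)).prod
      ((QuotientAddGroup.mk' (negligibleGroup q)).comp (prodSndAux p q)))
    (by
      intro w hw
      have hw' : IsNegligible (prodSeminorm p q) (w : ℝ → E × F) := hw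
      rw [AddMonoidHom.mem_ker]
      refine Prod.ext ?_ ?_
      · show (QuotientAddGroup.mk' (negligibleGroup p)) (prodFstAux p q w) = 0
        rw [QuotientAddGroup.mk'_apply, QuotientAddGroup.eq_zero_iff]
        show IsNegligible p _
        intro i m
        obtain ⟨j⟩ := ‹Nonempty κ›
        filter_upwards [hw' (i, j) m] with ε hε
        calc p i (((w : ℝ → E × F) ε).1)
            ≤ prodSeminorm p q (i, j) ((w : ℝ → E × F) ε) := by
              rw [prodSeminorm_apply]; exact le_max_left _ _
          _ ≤ ε ^ m := hε
      · show (QuotientAddGroup.mk' (negligibleGroup q)) (prodSndAux p q w) = 0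
        rw [QuotientAddGroup.mk'_apply, QuotientAddGroup.eq_zero_iff]
        show IsNegligible q _
        intro j m
        obtain ⟨i⟩ := ‹Nonempty ι›
        filter_upwards [hw' (i, j) m] with ε hε
        calc q j (((w : ℝ → E × F) ε).2)
            ≤ prodSeminorm p q (i, j) ((w : ℝ → E × F) ε) := by
              rw [prodSeminorm_apply]; exact le_max_right _ _
          _ ≤ ε ^ m := hε)

/-- A subset of `𝒢_E × 𝒢_F` is internal if, under the canonical identification
`𝒢_{E×F} ≅ 𝒢_E × 𝒢_F`, it corresponds to an internal subset of `𝒢_{E×F}`. -/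
def IsInternalProd [Nonempty ι] [Nonempty κ] (p : ι → Seminorm ℝ E) (q : κ → Seminorm ℝ F)
    (C : Set (Colombeau p × Colombeau q)) : Prop :=
  ∃ Cnet : ℝ → Set (E × F),
    C = prodIdent p q '' internalSet (prodSeminorm p q) Cnet

section Normed

variable (V : Type*) [NormedAddCommGroup V] [NormedSpace ℝ V]

/-- The norm of a normed space, as a one-element family of seminorms. -/
abbrev normFamily : Unit → Seminorm ℝ V := fun _ => normSeminorm ℝ V

/-- The Colombeau space based on a normed space `V`. -/
abbrev GN := Colombeau (normFamily V)

variable {V}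

/-- `‖u‖ ≤ α ^ t` in `ℝ̃`, where `α` is the class of `(ε)_ε`. -/
def normLeAlpha (u : GN V) (t : ℝ) : Prop :=
  ∃ (w : moderateGroup (normFamily V)) (n : ℝ → ℝ),
    (QuotientAddGroup.mk w : GN V) = u ∧ IsNegligibleR n ∧
    ∀ᶠ ε in 𝓝[>] (0 : ℝ), ‖(w : ℝ → V) ε‖ ≤ ε ^ t + n ε

/-- `‖u‖ ≤ ‖v‖` in `ℝ̃`. -/
def normLeNorm (u v : GN V) : Prop :=
  ∃ (a b : moderateGroup (normFamily V)) (n : ℝ → ℝ),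
    (QuotientAddGroup.mk a : GN V) = u ∧ (QuotientAddGroup.mk b : GN V) = v ∧
    IsNegligibleR n ∧
    ∀ᶠ ε in 𝓝[>] (0 : ℝ), ‖(a : ℝ → V) ε‖ ≤ ‖(b : ℝ → V) ε‖ + n ε

/-- A subset `A ⊆ 𝒢_V` is sharply bounded if `‖u‖ ≤ α^{-M}` for some `M ∈ ℕ` and all `u ∈ A`. -/
def SharplyBounded (A : Set (GN V)) : Prop :=
  ∃ M : ℕ, ∀ u ∈ A, normLeAlpha u (-(M : ℝ))

/-- A sharply bounded net of subsets of the normed space `V`. -/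
def SharplyBoundedNetN (A : ℝ → Set V) : Prop :=
  ∃ M : ℕ, ∀ᶠ ε in 𝓝[>] (0 : ℝ), ∀ w ∈ A ε, ‖w‖ ≤ ε ^ (-(M : ℤ))

end Normed

/-!
If `u ∉ A = [(A_ε)]`, some sharp ball `{v | |p_n(v - u)|_s < e^{-n}}` misses `A`. Otherwise, for
every `n` there is a representative `a_n` of a point of `A` with `a_n,ε ∈ A_ε` and
`p_n(a_n,ε - u_ε) ≤ ε^n` for `ε` small. Choosing `c_ε = a_{N(ε),ε}` along a diagonal with
`N(ε) → ∞`, monotonicity of `(p_n)` makes `c - u` negligible, so `c` represents `u` and `u ∈ A`.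
-/

lemma exists_index_mem_of_antitone {α : Type*} {T : ℕ → Set α} (hT : Antitone T)
    (hempty : ∀ x, ∃ n, x ∉ T n) :
    ∃ N : α → ℕ, (∀ x ∈ T 0, x ∈ T (N x)) ∧ ∀ m, ∀ x ∈ T m, m ≤ N x := by
  classical
  have hexit : ∀ x, ∃ n, x ∉ T (n + 1) := fun x =>
    let ⟨n, hn⟩ := hempty x
    ⟨n, fun h => hn (hT n.le_succ h)⟩
  refine ⟨fun x => Nat.find (hexit x), fun x hx => ?_, fun m x hx => ?_⟩
  · show x ∈ T (Nat.find (hexit x))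
    rcases h : Nat.find (hexit x) with _ | k
    · exact hx
    · simpa using Nat.find_min (hexit x) (show k < Nat.find (hexit x) by omega)
  · by_contra! hlt
    exact Nat.find_spec (hexit x) (hT hlt hx)

lemma exists_tendsto_atTop_eventually {α : Type*} {l : Filter α} [l.IsCountablyGenerated]
    (hl : l.ker = ∅) {P : ℕ → α → Prop} (hP : ∀ n, ∀ᶠ x in l, P n x) :
    ∃ N : α → ℕ, Tendsto N l atTop ∧ ∀ᶠ x in l, P (N x) x := by
  obtain ⟨s, hs⟩ := l.exists_antitone_basis
  set T : ℕ → Set α := fun n => s n ∩ {x | ∀ j ≤ n, P j x}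
  have hTl : ∀ n, T n ∈ l := fun n =>
    inter_mem (hs.mem n) ((Set.finite_le_nat n).eventually_all.2 fun j _ => hP j)
  have hTanti : Antitone T := fun m n hmn x hx =>
    ⟨hs.antitone hmn hx.1, fun j hj => hx.2 j (hj.trans hmn)⟩
  have hempty : ∀ x, ∃ n, x ∉ T n := by
    intro x
    have hx : x ∉ l.ker := hl ▸ Set.notMem_empty x
    rw [hs.1.ker, Set.mem_iInter₂] at hx
    push Not at hx
    obtain ⟨n, -, hn⟩ := hx
    exact ⟨n, fun h => hn h.1⟩
  obtain ⟨N, hN0, hNge⟩ := exists_index_mem_of_antitone hTanti hempty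
  refine ⟨N, tendsto_atTop.2 fun m => mem_of_superset (hTl m) (hNge m), ?_⟩
  exact mem_of_superset (hTl 0) fun x hx => (hN0 x hx).2 (N x) le_rfl

lemma ker_nhdsGT {α : Type*} [TopologicalSpace α] [LinearOrder α] [OrderTopology α] (a : α) :
    (𝓝[>] a).ker = ∅ := by
  refine Set.eq_empty_iff_forall_notMem.2 fun x hx => ?_
  rw [mem_ker] at hx
  have hax : a < x := hx _ self_mem_nhdsWithin
  exact lt_irrefl x (hx _ (Ioo_mem_nhdsGT hax)).2

lemma rpow_isLittleO_rpow_nhdsGT_zero {s t : ℝ} (hst : s < t) :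
    (fun ε : ℝ => ε ^ t) =o[𝓝[>] 0] fun ε => ε ^ s := by
  have hpos : ∀ᶠ ε : ℝ in 𝓝[>] 0, 0 < ε := self_mem_nhdsWithin
  refine (isLittleO_iff_tendsto' (hpos.mono fun ε hε h => ?_)).2 ?_
  · exact absurd h (Real.rpow_pos_of_pos hε s).ne'
  have hlim : Tendsto (fun ε : ℝ => ε ^ (t - s)) (𝓝[>] 0) (𝓝 0) := by
    have hcont := Real.continuousAt_rpow_const 0 (t - s) (Or.inr (sub_pos.2 hst).le)
    simpa [Real.zero_rpow (sub_pos.2 hst).ne'] using hcont.tendsto.mono_left nhdsWithin_le_nhds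
  refine hlim.congr' (hpos.mono fun ε hε => ?_)
  rw [Real.rpow_sub hε]

lemma eventually_le_pow_of_isLittleO {f : ℝ → ℝ} {n : ℕ}
    (h : f =o[𝓝[>] 0] fun ε => ε ^ (n : ℝ)) : ∀ᶠ ε in 𝓝[>] 0, f ε ≤ ε ^ n := by
  filter_upwards [h.bound one_pos, self_mem_nhdsWithin] with ε hfε (hε : 0 < ε)
  rw [one_mul, Real.rpow_natCast, Real.norm_eq_abs, Real.norm_eq_abs,
    abs_of_pos (pow_pos hε n)] at hfε
  exact (le_abs_self _).trans hfε

section Sharp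

variable {p : ι → Seminorm ℝ E} {i : ι}

lemma IsNegligible.isModerate {u : ℝ → E} (h : IsNegligible p u) : IsModerate p u :=
  fun i => ⟨0, by simpa using h i 0⟩

lemma IsModerate.exists_isBigO_rpow {u : ℝ → E} (hu : IsModerate p u) (i : ι) :
    ∃ b : ℝ, (fun ε => p i (u ε)) =O[𝓝[>] 0] fun ε => ε ^ b := by
  obtain ⟨M, hM⟩ := hu i
  refine ⟨-(M : ℝ), IsBigO.of_bound' ?_⟩
  filter_upwards [hM, self_mem_nhdsWithin] with ε hε (hε0 : 0 < ε)
  rw [Real.norm_of_nonneg (apply_nonneg _ _), Real.norm_of_nonneg (by positivity),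
    show -(M : ℝ) = ((-(M : ℤ) : ℤ) : ℝ) by push_cast; rfl, Real.rpow_intCast]
  exact hε

lemma IsNegligible.isLittleO_rpow {u : ℝ → E} (hu : IsNegligible p u) (i : ι) (t : ℝ) :
    (fun ε => p i (u ε)) =o[𝓝[>] 0] fun ε => ε ^ t := by
  obtain ⟨m, hm⟩ := exists_nat_gt t
  refine IsBigO.trans_isLittleO (IsBigO.of_bound' ?_) (rpow_isLittleO_rpow_nhdsGT_zero hm)
  filter_upwards [hu i m, self_mem_nhdsWithin] with ε hε (hε0 : 0 < ε)
  rw [Real.norm_of_nonneg (apply_nonneg _ _), Real.norm_of_nonneg (by positivity),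
    Real.rpow_natCast]
  exact hε

lemma sharpSemi_le_exp {u : Colombeau p} (w : moderateGroup p) (hw : QuotientAddGroup.mk w = u)
    {b : ℝ} (hb : (fun ε => p i ((w : ℝ → E) ε)) =O[𝓝[>] 0] fun ε => ε ^ b) :
    sharpSemi p i u ≤ Real.exp (-b) :=
  csInf_le ⟨0, by rintro _ ⟨b, w, -, rfl, -⟩; positivity⟩ ⟨b, w, hw, rfl, hb⟩

lemma sharpSemi_zero : sharpSemi p i 0 = 0 := by
  refine le_antisymm (le_of_forall_pos_le_add fun r hr => ?_)
    (Real.sInf_nonneg (by rintro _ ⟨b, w, -, rfl, -⟩; positivity))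
  have h := sharpSemi_le_exp (p := p) (i := i) 0 rfl (b := -Real.log r)
    (by simpa using isBigO_zero _ _)
  rwa [neg_neg, Real.exp_log hr, ← zero_add r] at h

lemma exists_isBigO_of_sharpSemi_lt (u : moderateGroup p) {t : ℝ}
    (h : sharpSemi p i (QuotientAddGroup.mk u) < Real.exp (-t)) :
    ∃ b > t, ∃ w : moderateGroup p, QuotientAddGroup.mk w = (QuotientAddGroup.mk u : Colombeau p) ∧
      (fun ε => p i ((w : ℝ → E) ε)) =O[𝓝[>] 0] fun ε => ε ^ b := by
  obtain ⟨b₀, hb₀⟩ := IsModerate.exists_isBigO_rpow u.2 i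
  unfold sharpSemi at h
  obtain ⟨_, ⟨b, w, hw, rfl, hb⟩, hlt⟩ := exists_lt_of_csInf_lt
    (by exact ⟨_, b₀, u, rfl, rfl, hb₀⟩) h
  exact ⟨b, by simpa using hlt, w, hw, hb⟩

lemma isLittleO_of_sharpSemi_lt (u : moderateGroup p) {t : ℝ}
    (h : sharpSemi p i (QuotientAddGroup.mk u) < Real.exp (-t)) :
    (fun ε => p i ((u : ℝ → E) ε)) =o[𝓝[>] 0] fun ε => ε ^ t := by
  obtain ⟨b, hbt, w, hw, hb⟩ := exists_isBigO_of_sharpSemi_lt u h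
  have hneg : IsNegligible p ((u - w : moderateGroup p) : ℝ → E) :=
    QuotientAddGroup.eq_iff_sub_mem.1 hw.symm
  refine IsBigO.trans_isLittleO (IsBigO.of_bound' (Eventually.of_forall fun ε => ?_))
    ((hb.trans_isLittleO (rpow_isLittleO_rpow_nhdsGT_zero hbt)).add (hneg.isLittleO_rpow i t))
  rw [Real.norm_of_nonneg (apply_nonneg _ _),
    Real.norm_of_nonneg (add_nonneg (apply_nonneg _ _) (apply_nonneg _ _))]
  calc p i ((u : ℝ → E) ε) = p i ((w : ℝ → E) ε + ((u - w : moderateGroup p) : ℝ → E) ε) := by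
        simp
    _ ≤ _ := map_add_le_add _ _ _

lemma mem_internalSet_of_isNegligible_sub {A : ℝ → Set E} (u : moderateGroup p) {c : ℝ → E}
    (hc : IsNegligible p (fun ε => c ε - (u : ℝ → E) ε)) (hmem : ∀ᶠ ε in 𝓝[>] 0, c ε ∈ A ε) :
    QuotientAddGroup.mk u ∈ internalSet p A := by
  have hmod : c ∈ moderateGroup p := by
    convert (moderateGroup p).add_mem u.2 hc.isModerate using 1
    funext ε
    simp
  exact ⟨⟨c, hmod⟩, QuotientAddGroup.eq_iff_sub_mem.2 hc, hmem⟩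

end Sharp

lemma isNegligible_of_eventually_le_pow {p : ℕ → Seminorm ℝ E} (hp : Monotone p) {d : ℝ → E}
    {N : ℝ → ℕ} (hN : Tendsto N (𝓝[>] 0) atTop)
    (hd : ∀ᶠ ε in 𝓝[>] 0, p (N ε) (d ε) ≤ ε ^ N ε) : IsNegligible p d := by
  intro i m
  filter_upwards [hd, hN.eventually_ge_atTop (max i m), Ioo_mem_nhdsGT one_pos]
    with ε hdε hNε hε
  calc p i (d ε) ≤ p (N ε) (d ε) := hp (le_of_max_le_left hNε) (d ε)
    _ ≤ ε ^ N ε := hdε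
    _ ≤ ε ^ m := pow_le_pow_of_le_one hε.1.le hε.2.le (le_of_max_le_right hNε)

lemma mem_internalSet_of_forall_sharpSemi_lt {p : ℕ → Seminorm ℝ E} (hp : Monotone p)
    {A : ℝ → Set E} {u : Colombeau p}
    (h : ∀ n : ℕ, ∃ v ∈ internalSet p A, sharpSemi p n (v - u) < Real.exp (-n)) :
    u ∈ internalSet p A := by
  choose v hv hvu using h
  choose a ha haA using hv
  obtain ⟨u, rfl⟩ := QuotientAddGroup.mk_surjective u
  have hclose : ∀ n, ∀ᶠ ε in 𝓝[>] 0, p n ((a n : ℝ → E) ε - (u : ℝ → E) ε) ≤ ε ^ n := by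
    intro n
    refine eventually_le_pow_of_isLittleO (isLittleO_of_sharpSemi_lt (a n - u) ?_)
    rw [QuotientAddGroup.mk_sub, ha n]
    exact hvu n
  obtain ⟨N, hN, hgood⟩ :=
    exists_tendsto_atTop_eventually (ker_nhdsGT 0) fun n => (haA n).and (hclose n)
  exact mem_internalSet_of_isNegligible_sub u (c := fun ε => (a (N ε) : ℝ → E) ε)
    (isNegligible_of_eventually_le_pow hp hN (hgood.mono fun _ h => h.2))
    (hgood.mono fun _ h => h.1)

/-- If the topology of `E` is generated by an increasing sequence of
seminorms (equivalently, `E` has a countable base of neighborhoods of `0`), then every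
internal subset of `𝒢_E` is closed in the sharp topology. -/
theorem isClosed_of_internal
    {E : Type*} [AddCommGroup E] [Module ℝ E]
    (p : ℕ → Seminorm ℝ E) (hp : Monotone p)
    (A : Set (Colombeau p)) (hA : IsInternal p A) :
    @IsClosed _ (sharpTopology p) A := by
  obtain ⟨A, rfl⟩ := hA
  let _ : TopologicalSpace (Colombeau p) := sharpTopology p
  rw [← isOpen_compl_iff, isOpen_iff_forall_mem_open]
  intro u hu
  obtain ⟨n, hn⟩ : ∃ n : ℕ, ∀ v ∈ internalSet p A, ¬ sharpSemi p n (v - u) < Real.exp (-n) := by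
    by_contra! h
    exact hu (mem_internalSet_of_forall_sharpSemi_lt hp h)
  refine ⟨{v | sharpSemi p n (v - u) < Real.exp (-n)}, fun v hv hvA => hn v hvA hv, ?_, ?_⟩
  · exact TopologicalSpace.isOpen_generateFrom_of_mem ⟨u, n, _, Real.exp_pos _, rfl⟩
  · simpa [sharpSemi_zero] using Real.exp_pos _

end ColombeauPaper
end
end

section
/- Let E be a normed vector space, let A and B be non-empty internal subsets of G_E, and let A be sharply bounded. Then the set {‖u−v‖ : u∈A, v∈B} ⊆ R̃ reaches a minimum in R̃: there exist u₀∈A and v₀∈B such that ‖u₀−v₀‖ ≤ ‖u−v‖ for all u∈A and v∈B. -/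
open Filter Topology Asymptotics

noncomputable section

namespace ColombeauPaper

variable {ι κ : Type*} {E : Type*} [AddCommGroup E] [Module ℝ E]
  {F : Type*} [AddCommGroup F] [Module ℝ F]

/-! Truncating `A_ε` to the ball of radius `ε^{-(M+1)}` does not change the internal set `A`,
by sharp boundedness. For each `ε` pick `(x_ε, y_ε) ∈ A_ε × B_ε` with `‖x_ε - y_ε‖` within
`e^{-1/ε}` of `inf ‖x - y‖`; this error is negligible, so `[(x_ε)], [(y_ε)]` is a minimizing
pair. The truncation makes `(x_ε)` moderate, and comparison with one fixed pair of `A × B`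
makes `(x_ε - y_ε)`, hence `(y_ε)`, moderate. -/

lemma zpow_neg_natCast_add_one_le {ε : ℝ} (hε : 0 < ε) (hε2 : ε ≤ 1 / 2) (M : ℕ) :
    ε ^ (-(M : ℤ)) + 1 ≤ ε ^ (-((M + 1 : ℕ) : ℤ)) := by
  have hone : 1 ≤ ε ^ (-(M : ℤ)) := one_le_zpow_of_nonpos₀ hε (by linarith) (by omega)
  have htwo : 2 ≤ ε⁻¹ := by rw [le_inv_comm₀ (by norm_num) hε]; linarith
  calc ε ^ (-(M : ℤ)) + 1 ≤ ε ^ (-(M : ℤ)) * 2 := by linarith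
    _ ≤ ε ^ (-(M : ℤ)) * ε⁻¹ := by gcongr
    _ = ε ^ (-((M + 1 : ℕ) : ℤ)) := by
      rw [← zpow_neg_one, ← zpow_add₀ hε.ne']; push_cast; ring_nf

lemma isNegligibleR_exp_neg_inv : IsNegligibleR (fun ε => Real.exp (-ε⁻¹)) := by
  intro m
  have hsmall : ∀ᶠ ε in 𝓝[>] (0 : ℝ), ε⁻¹ ^ m * Real.exp (-ε⁻¹) < 1 :=
    ((Real.tendsto_pow_mul_exp_neg_atTop_nhds_zero m).comp
      tendsto_inv_nhdsGT_zero).eventually_lt_const one_pos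
  filter_upwards [hsmall, self_mem_nhdsWithin] with ε hlt (hε : 0 < ε)
  rw [abs_of_pos (Real.exp_pos _)]
  calc Real.exp (-ε⁻¹) = ε ^ m * (ε⁻¹ ^ m * Real.exp (-ε⁻¹)) := by
        rw [← mul_assoc, ← mul_pow, mul_inv_cancel₀ hε.ne', one_pow, one_mul]
    _ ≤ ε ^ m := mul_le_of_le_one_right (by positivity) hlt.le

lemma isModerate_of_le_add_negligible {p : ι → Seminorm ℝ E} {u : ℝ → E} (w : moderateGroup p)
    {n : ℝ → ℝ} (hn : IsNegligibleR n) (h : ∀ i, ∀ᶠ ε in 𝓝[>] (0 : ℝ),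
      p i (u ε) ≤ p i ((w : ℝ → E) ε) + n ε) :
    IsModerate p u := by
  intro i
  obtain ⟨M, hM⟩ := w.2 i
  refine ⟨M + 1, ?_⟩
  filter_upwards [h i, hM, hn 0, small_mem] with ε hu hw hn ⟨hε, hε2⟩
  rw [pow_zero] at hn
  linarith [le_abs_self (n ε), zpow_neg_natCast_add_one_le hε hε2 M]

lemma exists_forall_le_add_of_bddBelow {α : Type*} {s : Set α} (hs : s.Nonempty) {f : α → ℝ}
    (hf : BddBelow (f '' s)) {δ : ℝ} (hδ : 0 < δ) : ∃ a ∈ s, ∀ b ∈ s, f a ≤ f b + δ := by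
  obtain ⟨_, ⟨a, ha, rfl⟩, hlt⟩ := Real.lt_sInf_add_pos (hs.image f) hδ
  exact ⟨a, ha, fun b hb => hlt.le.trans (by gcongr; exact csInf_le hf ⟨b, hb, rfl⟩)⟩

lemma exists_eventually_near_min_norm_sub {β G : Type*} [SeminormedAddGroup G] {l : Filter β}
    [l.NeBot] {S T : β → Set G} {δ : β → ℝ} (hS : ∀ᶠ b in l, (S b).Nonempty)
    (hT : ∀ᶠ b in l, (T b).Nonempty) (hδ : ∀ᶠ b in l, 0 < δ b) :
    ∃ z : β → G × G, ∀ᶠ b in l, (z b).1 ∈ S b ∧ (z b).2 ∈ T b ∧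
      ∀ x ∈ S b, ∀ y ∈ T b, ‖(z b).1 - (z b).2‖ ≤ ‖x - y‖ + δ b := by
  have hnear : ∀ᶠ b in l, ∃ z : G × G, z.1 ∈ S b ∧ z.2 ∈ T b ∧
      ∀ x ∈ S b, ∀ y ∈ T b, ‖z.1 - z.2‖ ≤ ‖x - y‖ + δ b := by
    filter_upwards [hS, hT, hδ] with b hSb hTb hδb
    obtain ⟨z, hz, hmin⟩ := exists_forall_le_add_of_bddBelow (hSb.prod hTb)
      (f := fun z : G × G => ‖z.1 - z.2‖) ⟨0, by rintro _ ⟨_, _, rfl⟩; positivity⟩ hδb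
    exact ⟨z, hz.1, hz.2, fun x hx y hy => hmin (x, y) ⟨hx, hy⟩⟩
  exact hnear.choice

section Normed

variable {V : Type*} [NormedAddCommGroup V] [NormedSpace ℝ V]

lemma normLeAlpha.eventually_norm_le {u : GN V} {M : ℕ} (hu : normLeAlpha u (-(M : ℝ)))
    {w : moderateGroup (normFamily V)} (hw : (QuotientAddGroup.mk w : GN V) = u) :
    ∀ᶠ ε in 𝓝[>] (0 : ℝ), ‖(w : ℝ → V) ε‖ ≤ ε ^ (-((M + 1 : ℕ) : ℤ)) := by
  obtain ⟨w', n, hw', hn, hle⟩ := hu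
  have hdiff : IsNegligible (normFamily V) ((w - w' : moderateGroup (normFamily V)) : ℝ → V) :=
    QuotientAddGroup.eq_iff_sub_mem.1 (hw.trans hw'.symm)
  filter_upwards [hle, hdiff () 1, hn 1, small_mem] with ε hle hdiff hn ⟨hε, hε2⟩
  rw [Real.rpow_neg_natCast] at hle
  simp only [AddSubgroup.coe_sub, Pi.sub_apply, coe_normSeminorm, pow_one] at hdiff hn
  calc ‖(w : ℝ → V) ε‖ ≤ ‖(w' : ℝ → V) ε‖ + ‖(w : ℝ → V) ε - (w' : ℝ → V) ε‖ :=
        norm_le_norm_add_norm_sub' _ _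
    _ ≤ ε ^ (-(M : ℤ)) + 1 := by linarith [le_abs_self (n ε)]
    _ ≤ _ := zpow_neg_natCast_add_one_le hε hε2 M

lemma SharplyBounded.exists_sharplyBoundedNetN {A : Set (GN V)}
    (hA : IsInternal (normFamily V) A) (hAb : SharplyBounded A) :
    ∃ Anet : ℝ → Set V, SharplyBoundedNetN Anet ∧ A = internalSet (normFamily V) Anet := by
  obtain ⟨Anet, rfl⟩ := hA
  obtain ⟨M, hM⟩ := hAb
  refine ⟨fun ε => Anet ε ∩ Metric.closedBall 0 (ε ^ (-((M + 1 : ℕ) : ℤ))),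
    ⟨M + 1, Eventually.of_forall fun ε x hx => mem_closedBall_zero_iff.1 hx.2⟩, ?_⟩
  ext u
  constructor
  · intro hu
    have hbound := hM u hu
    obtain ⟨w, hw, hwA⟩ := hu
    refine ⟨w, hw, ?_⟩
    filter_upwards [hwA, hbound.eventually_norm_le hw] with ε hA hball
    exact ⟨hA, mem_closedBall_zero_iff.2 hball⟩
  · rintro ⟨w, hw, hwA⟩
    exact ⟨w, hw, hwA.mono fun ε h => h.1⟩

lemma SharplyBoundedNetN.isModerate {Anet : ℝ → Set V} (hA : SharplyBoundedNetN Anet)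
    {u : ℝ → V} (hu : ∀ᶠ ε in 𝓝[>] (0 : ℝ), u ε ∈ Anet ε) : IsModerate (normFamily V) u := by
  obtain ⟨M, hM⟩ := hA
  exact fun _ => ⟨M, by filter_upwards [hM, hu] with ε hM hu using hM _ hu⟩

lemma exists_min_norm_sub_of_sharplyBoundedNetN {Anet Bnet : ℝ → Set V}
    (hA : SharplyBoundedNetN Anet) (hAne : (internalSet (normFamily V) Anet).Nonempty)
    (hBne : (internalSet (normFamily V) Bnet).Nonempty) :
    ∃ u₀ ∈ internalSet (normFamily V) Anet, ∃ v₀ ∈ internalSet (normFamily V) Bnet,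
      ∀ u ∈ internalSet (normFamily V) Anet, ∀ v ∈ internalSet (normFamily V) Bnet,
        normLeNorm (u₀ - v₀) (u - v) := by
  obtain ⟨_, wa, rfl, hwa⟩ := hAne
  obtain ⟨_, wb, rfl, hwb⟩ := hBne
  obtain ⟨z, hz⟩ := exists_eventually_near_min_norm_sub (hwa.mono fun _ h => ⟨_, h⟩)
    (hwb.mono fun _ h => ⟨_, h⟩) (Eventually.of_forall fun ε => Real.exp_pos (-ε⁻¹))
  have hx : IsModerate (normFamily V) fun ε => (z ε).1 := hA.isModerate (hz.mono fun _ h => h.1)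
  have hxy : IsModerate (normFamily V) fun ε => (z ε).1 - (z ε).2 :=
    isModerate_of_le_add_negligible (wa - wb) isNegligibleR_exp_neg_inv fun _ => by
      filter_upwards [hz, hwa, hwb] with ε h ha hb using h.2.2 _ ha _ hb
  have hy : IsModerate (normFamily V) fun ε => (z ε).2 := by
    show (fun ε => (z ε).2) ∈ moderateGroup (normFamily V)
    simpa [Pi.sub_def] using (moderateGroup (normFamily V)).sub_mem hx hxy
  refine ⟨QuotientAddGroup.mk ⟨_, hx⟩, ⟨_, rfl, hz.mono fun _ h => h.1⟩,
    QuotientAddGroup.mk ⟨_, hy⟩, ⟨_, rfl, hz.mono fun _ h => h.2.1⟩, ?_⟩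
  rintro _ ⟨wu, rfl, hwu⟩ _ ⟨wv, rfl, hwv⟩
  refine ⟨_, wu - wv, _, (QuotientAddGroup.mk_sub _ _ _).symm,
    (QuotientAddGroup.mk_sub _ _ _).symm, isNegligibleR_exp_neg_inv, ?_⟩
  filter_upwards [hz, hwu, hwv] with ε h hu hv using h.2.2 _ hu _ hv

end Normed

/-- If `A`, `B` are non-empty internal subsets of `𝒢_E` (`E` normed)
and `A` is sharply bounded, then `{‖u - v‖ : u ∈ A, v ∈ B}` reaches a minimum in `ℝ̃`. -/
theorem exists_min_norm_sub
    {V : Type*} [NormedAddCommGroup V] [NormedSpace ℝ V]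
    (A B : Set (GN V)) (hA : IsInternal (normFamily V) A) (hB : IsInternal (normFamily V) B)
    (hAne : A.Nonempty) (hBne : B.Nonempty) (hAb : SharplyBounded A) :
    ∃ u₀ ∈ A, ∃ v₀ ∈ B, ∀ u ∈ A, ∀ v ∈ B, normLeNorm (u₀ - v₀) (u - v) := by
  obtain ⟨Anet, hAnet, rfl⟩ := hAb.exists_sharplyBoundedNetN hA
  obtain ⟨Bnet, rfl⟩ := hB
  exact exists_min_norm_sub_of_sharplyBoundedNetN hAnet hAne hBne

end ColombeauPaper
end
end

section
/- Let A = [(A_ε)] and B = [(B_ε)] be non-empty internal subsets of G_E. Then [(A_ε ∪ B_ε)] = interl(A ∪ B) = {e_S a + e_{(0,1)∖S} b : a∈A, b∈B, S ⊆ (0,1)}, and this set is the smallest internal subset of G_E containing A ∪ B. -/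
open Filter Topology Asymptotics

noncomputable section

namespace ColombeauPaper

variable {ι κ : Type*} {E : Type*} [AddCommGroup E] [Module ℝ E]
  {F : Type*} [AddCommGroup F] [Module ℝ F]

/-!
An element `u` of `[(A_ε ∪ B_ε)]` has a representative lying in `A_ε` for `ε ∈ S` and in `B_ε`
for `ε ∈ (0,1) ∖ S`. Patching it with fixed `a₀ ∈ A`, `b₀ ∈ B` gives
`a = e_S u + e_{(0,1)∖S} a₀ ∈ A` and `b = e_S b₀ + e_{(0,1)∖S} u ∈ B`, and the idempotent
calculus of the `e_S` yields `u = e_S a + e_{(0,1)∖S} b`. Conversely, at each `ε` a representative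
of an interleaving `∑ e_{S_j} a_j` agrees with a representative of one of the `a_j`, so internal
sets are closed under interleaving; this gives the reverse inclusions and the minimality.
-/

section Interleaving

variable {E : Type*} [AddCommGroup E] [Module ℝ E] {ι : Type*} (p : ι → Seminorm ℝ E)

lemma eventually_mem_Ioo_zero_one : ∀ᶠ ε in 𝓝[>] (0 : ℝ), ε ∈ Set.Ioo (0 : ℝ) 1 :=
  Ioo_mem_nhdsGT_of_mem ⟨le_rfl, one_pos⟩

lemma mk_eq_mk_of_eventuallyEq {w v : moderateGroup p}
    (h : (w : ℝ → E) =ᶠ[𝓝[>] 0] (v : ℝ → E)) :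
    (QuotientAddGroup.mk w : Colombeau p) = QuotientAddGroup.mk v := by
  rw [QuotientAddGroup.eq_iff_sub_mem]
  intro i m
  filter_upwards [h, self_mem_nhdsWithin] with ε hε (hpos : 0 < ε)
  change p i ((w : ℝ → E) ε - (v : ℝ → E) ε) ≤ ε ^ m
  rw [hε, sub_self, map_zero]
  positivity

lemma coe_eAux (S : Set ℝ) (w : moderateGroup p) :
    ((eAux p S w : moderateGroup p) : ℝ → E) = fun ε => S.indicator (1 : ℝ → ℝ) ε • (w : ℝ → E) ε :=
  rfl

lemma coe_sum_moderateGroup {m : ℕ} (w : Fin m → moderateGroup p) :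
    ((∑ j, w j : moderateGroup p) : ℝ → E) = ∑ j, (w j : ℝ → E) :=
  map_sum (moderateGroup p).subtype w Finset.univ

lemma eMul_mk (S : Set ℝ) (w : moderateGroup p) :
    eMul p S (QuotientAddGroup.mk w) = QuotientAddGroup.mk (eAux p S w) :=
  rfl

lemma eMul_eMul (S T : Set ℝ) (u : Colombeau p) :
    eMul p S (eMul p T u) = eMul p (S ∩ T) u := by
  induction u using QuotientAddGroup.induction_on with
  | H w =>
    simp only [eMul_mk]
    congr 1
    ext1
    funext ε
    simp only [coe_eAux, smul_smul, Set.inter_indicator_one, Pi.mul_apply]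

lemma eMul_empty (u : Colombeau p) : eMul p ∅ u = 0 := by
  induction u using QuotientAddGroup.induction_on with
  | H w =>
    rw [eMul_mk, QuotientAddGroup.eq_zero_iff]
    convert (negligibleGroup p).zero_mem
    ext1
    funext ε
    simp [coe_eAux]

lemma eMul_add_eMul_of_disjoint {S T : Set ℝ} (h : Disjoint S T) (u : Colombeau p) :
    eMul p S u + eMul p T u = eMul p (S ∪ T) u := by
  induction u using QuotientAddGroup.induction_on with
  | H w =>
    simp only [eMul_mk, ← QuotientAddGroup.mk_add]
    congr 1
    ext1
    funext ε
    simp only [AddSubgroup.coe_add, Pi.add_apply, coe_eAux, ← add_smul,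
      Set.indicator_union_of_disjoint h]

lemma eMul_Ioo_zero_one (u : Colombeau p) : eMul p (Set.Ioo 0 1) u = u := by
  induction u using QuotientAddGroup.induction_on with
  | H w =>
    rw [eMul_mk]
    apply mk_eq_mk_of_eventuallyEq
    filter_upwards [eventually_mem_Ioo_zero_one] with ε hε
    simp [coe_eAux, hε]

lemma internalSet_mono {A B : ℝ → Set E} (h : ∀ ε, A ε ⊆ B ε) :
    internalSet p A ⊆ internalSet p B := by
  rintro u ⟨w, rfl, hw⟩
  exact ⟨w, rfl, hw.mono fun ε hε => h ε hε⟩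

lemma interleaving_mono {A B : Set (Colombeau p)} (h : A ⊆ B) :
    interleaving p A ⊆ interleaving p B := by
  rintro u ⟨m, S, a, ha, hS, hdisj, hcover, rfl⟩
  exact ⟨m, S, a, fun j => h (ha j), hS, hdisj, hcover, rfl⟩

lemma sum_eMul_mk_mem_internalSet (C : ℝ → Set E) {m : ℕ} {S : Fin m → Set ℝ}
    (hdisj : Pairwise fun j k => Disjoint (S j) (S k)) (hcover : (⋃ j, S j) = Set.Ioo 0 1)
    (w : Fin m → moderateGroup p)
    (hw : ∀ j, ∀ᶠ ε in 𝓝[>] (0 : ℝ), ε ∈ S j → (w j : ℝ → E) ε ∈ C ε) :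
    ∑ j, eMul p (S j) (QuotientAddGroup.mk (w j)) ∈ internalSet p C := by
  refine ⟨∑ j, eAux p (S j) (w j), map_sum (QuotientAddGroup.mk' (negligibleGroup p)) _ _, ?_⟩
  filter_upwards [eventually_all.2 hw, eventually_mem_Ioo_zero_one] with ε hwε hε
  obtain ⟨j, hj⟩ := Set.mem_iUnion.1 (hcover ▸ hε : ε ∈ ⋃ j, S j)
  have hsum : ∑ k, (S k).indicator (1 : ℝ → ℝ) ε • (w k : ℝ → E) ε = (w j : ℝ → E) ε := by
    rw [Finset.sum_eq_single j]
    · simp [hj]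
    · intro k _ hkj
      simp [Set.indicator_of_notMem fun hk => (hdisj hkj).le_bot ⟨hk, hj⟩]
    · simp
  rw [coe_sum_moderateGroup, Finset.sum_apply]
  simpa only [coe_eAux, hsum] using hwε j hj

lemma interleaving_internalSet_subset (C : ℝ → Set E) :
    interleaving p (internalSet p C) ⊆ internalSet p C := by
  rintro u ⟨m, S, a, ha, -, hdisj, hcover, rfl⟩
  choose w hwa hw using ha
  simp only [← hwa]
  exact sum_eMul_mk_mem_internalSet p C hdisj hcover w fun j => (hw j).mono fun _ h _ => h

lemma pairwise_disjoint_pair_diff (S : Set ℝ) :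
    Pairwise fun j k => Disjoint (![S, Set.Ioo 0 1 \ S] j) (![S, Set.Ioo 0 1 \ S] k) := by
  intro j k hjk
  fin_cases j <;> fin_cases k <;> simp_all [disjoint_sdiff_self_right, disjoint_sdiff_self_left]

lemma iUnion_pair_diff {S : Set ℝ} (hS : S ⊆ Set.Ioo 0 1) :
    (⋃ j, ![S, Set.Ioo 0 1 \ S] j) = Set.Ioo 0 1 := by
  ext ε
  have := @hS ε
  simp only [Set.mem_iUnion, Fin.exists_fin_two, Matrix.cons_val_zero, Matrix.cons_val_one,
    Set.mem_sdiff]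
  tauto

lemma eMul_add_eMul_diff_mem_interleaving {A : Set (Colombeau p)} {a b : Colombeau p}
    (ha : a ∈ A) (hb : b ∈ A) {S : Set ℝ} (hS : S ⊆ Set.Ioo 0 1) :
    eMul p S a + eMul p (Set.Ioo 0 1 \ S) b ∈ interleaving p A := by
  refine ⟨2, ![S, Set.Ioo 0 1 \ S], ![a, b], ?_, ?_, pairwise_disjoint_pair_diff S,
    iUnion_pair_diff hS, by simp [Fin.sum_univ_two]⟩
  · simp [Fin.forall_fin_two, ha, hb]
  · simp [Fin.forall_fin_two, hS]

lemma eMul_mk_add_eMul_diff_mk_mem_internalSet (C : ℝ → Set E) {S : Set ℝ}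
    (hS : S ⊆ Set.Ioo 0 1) {w v : moderateGroup p}
    (hw : ∀ᶠ ε in 𝓝[>] (0 : ℝ), ε ∈ S → (w : ℝ → E) ε ∈ C ε)
    (hv : ∀ᶠ ε in 𝓝[>] (0 : ℝ), ε ∈ Set.Ioo 0 1 \ S → (v : ℝ → E) ε ∈ C ε) :
    eMul p S (QuotientAddGroup.mk w) + eMul p (Set.Ioo 0 1 \ S) (QuotientAddGroup.mk v)
      ∈ internalSet p C := by
  simpa [Fin.sum_univ_two] using sum_eMul_mk_mem_internalSet p C
    (pairwise_disjoint_pair_diff S) (iUnion_pair_diff hS) ![w, v] (Fin.forall_fin_two.2 ⟨hw, hv⟩)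

lemma exists_eMul_add_eMul_diff_of_mem_internalSet_union {A B : ℝ → Set E}
    (hA : (internalSet p A).Nonempty) (hB : (internalSet p B).Nonempty) {u : Colombeau p}
    (hu : u ∈ internalSet p fun ε => A ε ∪ B ε) :
    ∃ a ∈ internalSet p A, ∃ b ∈ internalSet p B, ∃ S : Set ℝ, S ⊆ Set.Ioo 0 1 ∧
      u = eMul p S a + eMul p (Set.Ioo 0 1 \ S) b := by
  obtain ⟨w, rfl, hw⟩ := hu
  obtain ⟨-, wA, rfl, hwA⟩ := hA
  obtain ⟨-, wB, rfl, hwB⟩ := hB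
  set S : Set ℝ := Set.Ioo 0 1 ∩ {ε | (w : ℝ → E) ε ∈ A ε}
  have hS : S ⊆ Set.Ioo 0 1 := Set.inter_subset_left
  refine ⟨_, eMul_mk_add_eMul_diff_mk_mem_internalSet p A hS
      (.of_forall fun ε hε => hε.2) (hwA.mono fun _ h _ => h),
    _, eMul_mk_add_eMul_diff_mk_mem_internalSet p B hS
      (hwB.mono fun _ h _ => h) (hw.mono fun ε h hε => h.resolve_left fun h' => hε.2 ⟨hε.1, h'⟩),
    S, hS, ?_⟩
  simp only [map_add, eMul_eMul, Set.inter_self, Set.inter_sdiff_self, Set.sdiff_inter_self,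
    eMul_empty, add_zero, zero_add, eMul_add_eMul_of_disjoint p disjoint_sdiff_self_right,
    Set.union_sdiff_cancel hS, eMul_Ioo_zero_one]

end Interleaving

/-- **Unions of internal sets.** For non-empty internal `A = [(A_ε)]`,
`B = [(B_ε)]`, the set `[(A_ε ∪ B_ε)]` equals `interl(A ∪ B)`, equals
`{e_S a + e_{(0,1)∖S} b : a ∈ A, b ∈ B, S ⊆ (0,1)}`, and is the smallest internal set
containing `A ∪ B`. -/
theorem union_internalSet
    {E : Type*} [AddCommGroup E] [Module ℝ E] {ι : Type*}
    (p : ι → Seminorm ℝ E) (Anet Bnet : ℝ → Set E)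
    (hAne : (internalSet p Anet).Nonempty) (hBne : (internalSet p Bnet).Nonempty) :
    internalSet p (fun ε => Anet ε ∪ Bnet ε)
        = interleaving p (internalSet p Anet ∪ internalSet p Bnet) ∧
    internalSet p (fun ε => Anet ε ∪ Bnet ε)
        = {w : Colombeau p | ∃ a ∈ internalSet p Anet, ∃ b ∈ internalSet p Bnet,
            ∃ S : Set ℝ, S ⊆ Set.Ioo 0 1 ∧
              w = eMul p S a + eMul p (Set.Ioo 0 1 \ S) b} ∧
    internalSet p Anet ∪ internalSet p Bnet ⊆ internalSet p (fun ε => Anet ε ∪ Bnet ε) ∧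
    (∀ C : Set (Colombeau p), IsInternal p C →
      internalSet p Anet ∪ internalSet p Bnet ⊆ C →
      internalSet p (fun ε => Anet ε ∪ Bnet ε) ⊆ C) := by
  have hsub : internalSet p Anet ∪ internalSet p Bnet
      ⊆ internalSet p (fun ε => Anet ε ∪ Bnet ε) :=
    Set.union_subset (internalSet_mono p fun _ => Set.subset_union_left)
      (internalSet_mono p fun _ => Set.subset_union_right)
  have hbinary : internalSet p (fun ε => Anet ε ∪ Bnet ε)
      ⊆ {w : Colombeau p | ∃ a ∈ internalSet p Anet, ∃ b ∈ internalSet p Bnet,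
            ∃ S : Set ℝ, S ⊆ Set.Ioo 0 1 ∧ w = eMul p S a + eMul p (Set.Ioo 0 1 \ S) b} :=
    fun _ hu => exists_eMul_add_eMul_diff_of_mem_internalSet_union p hAne hBne hu
  have hinterl : ∀ {D : Set (Colombeau p)}, internalSet p Anet ∪ internalSet p Bnet ⊆ D →
      internalSet p (fun ε => Anet ε ∪ Bnet ε) ⊆ interleaving p D := by
    intro D hD
    refine hbinary.trans ?_
    rintro _ ⟨a, ha, b, hb, S, hS, rfl⟩
    exact eMul_add_eMul_diff_mem_interleaving p (hD (Or.inl ha)) (hD (Or.inr hb)) hS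
  have hclosed : interleaving p (internalSet p Anet ∪ internalSet p Bnet)
      ⊆ internalSet p (fun ε => Anet ε ∪ Bnet ε) :=
    (interleaving_mono p hsub).trans (interleaving_internalSet_subset p _)
  refine ⟨(hinterl subset_rfl).antisymm hclosed, hbinary.antisymm ?_, hsub, ?_⟩
  · rintro _ ⟨a, ha, b, hb, S, hS, rfl⟩
    exact hclosed (eMul_add_eMul_diff_mem_interleaving p (Or.inl ha) (Or.inr hb) hS)
  · rintro C ⟨Cnet, rfl⟩ hC
    exact (hinterl hC).trans (interleaving_internalSet_subset p Cnet)

end ColombeauPaper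
end
end
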